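/- arXiv:2303.01109 — 2 statements merged into one kernel-verified Lean document; each statement's English description precedes it below -/
import Mathlib

section
/- For real numbers a, b, z and positive reals c, y with μ > 1 and y − μz > 0, and for any ε ∈ (0,1), one has (y − z)² − a√y (y − μz) − b y − c√y ≥ (y − μz)²/μ² − a²μ²(y − μz)/(8(μ−1)) − (3/4) c^{4/3} (μ²/(4ε(μ−1)²))^{1/3} − μ²b²/(4(1−ε)(μ−1)²). -/
set_option maxHeartbeats 1000000 in
theorem stmt_0 (a b z c y μ ε : ℝ) (hc : 0 < c) (hy : 0 < y) (hμ : 1 < μ)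
    (hyz : 0 < y - μ * z) (hε : ε ∈ Set.Ioo (0:ℝ) 1) :
    (y - z)^2 - a * Real.sqrt y * (y - μ * z) - b * y - c * Real.sqrt y ≥
      (y - μ * z)^2 / μ^2 - a^2 * μ^2 * (y - μ * z) / (8 * (μ - 1))
        - (3/4) * c ^ ((4:ℝ)/3) * (μ^2 / (4 * ε * (μ - 1)^2)) ^ ((1:ℝ)/3)
        - μ^2 * b^2 / (4 * (1 - ε) * (μ - 1)^2) := by
  obtain ⟨hε0, hε1⟩ := hε
  have hε1' : (0:ℝ) < 1 - ε := by linarith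
  have hμ1 : (0:ℝ) < μ - 1 := by linarith
  have hμ0 : (0:ℝ) < μ := by linarith
  have hμ2 : (0:ℝ) < μ^2 := by positivity
  set s := Real.sqrt y with hs
  have hs0 : 0 < s := Real.sqrt_pos.mpr hy
  have hsy : s^2 = y := Real.sq_sqrt hy.le
  set X := c * μ^2 / (4*ε*(μ-1)^2) with hX
  have hX0 : 0 < X := by positivity
  set t := X ^ ((1:ℝ)/3) with ht
  have ht0 : 0 < t := Real.rpow_pos_of_pos hX0 _
  have ht3 : t^3 = X := by
    rw [ht, ← Real.rpow_natCast (X ^ ((1:ℝ)/3)) 3, ← Real.rpow_mul hX0.le]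
    norm_num
  have hct : c * μ^2 = 4*ε*(μ-1)^2 * t^3 := by
    rw [ht3, hX]; field_simp
  have hkey : c ^ ((4:ℝ)/3) * (μ^2 / (4*ε*(μ-1)^2)) ^ ((1:ℝ)/3) = c * t := by
    rw [ht, hX, show (4:ℝ)/3 = 1 + 1/3 by norm_num, Real.rpow_add hc, Real.rpow_one,
        mul_assoc, ← Real.mul_rpow hc.le (by positivity), mul_div_assoc]
  clear_value s t X
  have h1 : (y - z)^2 = (y - μ*z)^2/μ^2 + 2*(μ-1)*(y - μ*z)*y/μ^2 + (μ-1)^2*y^2/μ^2 := by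
    field_simp
    ring
  have h2 : a * s * (y - μ*z) ≤ 2*(μ-1)*(y - μ*z)*y/μ^2 + a^2*μ^2*(y - μ*z)/(8*(μ-1)) := by
    rw [← hsy, div_add_div _ _ (by positivity) (by positivity), le_div_iff₀ (by positivity)]
    have hw : 0 < s^2 - μ*z := by rw [hsy]; exact hyz
    nlinarith [mul_nonneg hw.le (sq_nonneg (4*(μ-1)*s - a*μ^2))]
  have h3 : b * y ≤ (μ-1)^2*y^2/μ^2 - ε*(μ-1)^2*y^2/μ^2 + μ^2*b^2/(4*(1-ε)*(μ-1)^2) := by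
    rw [div_sub_div _ _ (by positivity) (by positivity : (μ:ℝ)^2 ≠ 0),
        div_add_div _ _ (by positivity) (by positivity), le_div_iff₀ (by positivity)]
    nlinarith [mul_nonneg hμ2.le (sq_nonneg (2*(1-ε)*(μ-1)^2*y - b*μ^2))]
  have hA : (0:ℝ) ≤ s^2 + 2*t*s + 3*t^2 := by
    nlinarith [mul_nonneg ht0.le hs0.le, sq_nonneg s, sq_nonneg t]
  have key : ε*(μ-1)^2*(s^2)^2 - (c*s - 3/4*(c*t))*μ^2
      = ε*(μ-1)^2*((s-t)^2*(s^2+2*t*s+3*t^2)) := by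
    linear_combination (3/4*t - s) * hct
  have h4 : c * s ≤ ε*(μ-1)^2*y^2/μ^2 + 3/4*(c*t) := by
    rw [← hsy, ← sub_le_iff_le_add, le_div_iff₀ hμ2]
    have pos : 0 ≤ ε*(μ-1)^2*((s-t)^2*(s^2+2*t*s+3*t^2)) :=
      mul_nonneg (by positivity) (mul_nonneg (sq_nonneg _) hA)
    linarith [key, pos]
  rw [ge_iff_le, show (3:ℝ)/4 * c ^ ((4:ℝ)/3) * (μ^2 / (4*ε*(μ-1)^2)) ^ ((1:ℝ)/3)
      = 3/4*(c*t) by rw [mul_assoc, hkey]]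
  linarith [h1, h2, h3, h4]
end

section
/- Let γ : ℝ → ℝ be C² with γ ≥ 0, γ' ≤ 0, and μγ'' + (μ−1)γ' ≥ 0 on ℝ for some μ > 1, and let p ≥ 0, q ≥ 0, s ≤ 1 with μs ≤ 1. Then Σ(u) = p·u·γ(log u) + q·u^s satisfies, for all u > 0: Σ(u) ≥ 0, uΣ'(u) − Σ(u) ≤ 0, and μu²Σ''(u) − uΣ'(u) + Σ(u) ≥ 0. -/
/-!
The operators `u Σ' - Σ` and `μ u² Σ'' - u Σ' + Σ` are linear, so they can be evaluated termwise.
On `u ↦ u γ(log u)` they give `u γ'(log u)` and `u (μ γ'' + (μ - 1) γ')(log u)`; on `u ↦ u ^ s`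
they give `(s - 1) u ^ s` and `(1 - s)(1 - μ s) u ^ s`. Each term has the required sign.
-/

open Real Filter Topology

theorem hasDerivAt_comp_log {h : ℝ → ℝ} {h' v : ℝ} (hh : HasDerivAt h h' (log v)) (hv : v ≠ 0) :
    HasDerivAt (fun w => h (log w)) (h' / v) v := by
  rw [div_eq_mul_inv]
  exact hh.comp v (hasDerivAt_log hv)

theorem hasDerivAt_id_mul_comp_log {h : ℝ → ℝ} {h' v : ℝ} (hh : HasDerivAt h h' (log v))
    (hv : v ≠ 0) : HasDerivAt (fun w => w * h (log w)) (h (log v) + h') v :=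
  ((hasDerivAt_id' v).mul (hasDerivAt_comp_log hh hv)).congr_deriv (by field_simp)

theorem hasDerivAt_rpow_const_div {s v : ℝ} (hv : v ≠ 0) :
    HasDerivAt (fun w => w ^ s) (s * v ^ s / v) v :=
  (hasDerivAt_rpow_const (Or.inl hv)).congr_deriv (by rw [rpow_sub_one hv]; ring)

noncomputable def sigmaFun (p q s : ℝ) (γ : ℝ → ℝ) (u : ℝ) : ℝ :=
  p * u * γ (log u) + q * u ^ s

theorem hasDerivAt_sigmaFun {p q s v : ℝ} {γ : ℝ → ℝ} (hγ : Differentiable ℝ γ) (hv : v ≠ 0) :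
    HasDerivAt (sigmaFun p q s γ)
      (p * (γ (log v) + deriv γ (log v)) + q * s * v ^ s / v) v := by
  have hsigma : sigmaFun p q s γ = fun w => p * (w * γ (log w)) + q * w ^ s := by
    ext w; simp only [sigmaFun, mul_assoc]
  rw [hsigma]
  exact (((hasDerivAt_id_mul_comp_log (hγ _).hasDerivAt hv).const_mul p).add
    ((hasDerivAt_rpow_const_div hv).const_mul q)).congr_deriv (by ring)

theorem hasDerivAt_deriv_sigmaFun {p q s v : ℝ} {γ : ℝ → ℝ} (hγ : Differentiable ℝ γ)
    (hγ' : Differentiable ℝ (deriv γ)) (hv : v ≠ 0) :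
    HasDerivAt (deriv (sigmaFun p q s γ))
      ((p * (deriv γ (log v) + deriv (deriv γ) (log v)) + q * s * (s - 1) * v ^ s / v) / v) v := by
  have hderiv : deriv (sigmaFun p q s γ) =ᶠ[𝓝 v]
      fun w => p * (γ + deriv γ) (log w) + q * s * w ^ (s - 1) := by
    filter_upwards [isOpen_ne.mem_nhds hv] with w hw
    rw [(hasDerivAt_sigmaFun hγ hw).deriv, rpow_sub_one hw, Pi.add_apply]; ring
  refine HasDerivAt.congr_of_eventuallyEq ?_ hderiv
  refine (((hasDerivAt_comp_log ((hγ _).hasDerivAt.add (hγ' _).hasDerivAt) hv).const_mul p).add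
    ((hasDerivAt_rpow_const_div hv).const_mul (q * s))).congr_deriv ?_
  rw [rpow_sub_one hv]
  field_simp

theorem sigmaFun_nonneg {p q s u : ℝ} {γ : ℝ → ℝ} (hp : 0 ≤ p) (hq : 0 ≤ q)
    (hγ : 0 ≤ γ (log u)) (hu : 0 < u) : 0 ≤ sigmaFun p q s γ u := by
  unfold sigmaFun
  have := rpow_pos_of_pos hu s
  positivity

theorem mul_deriv_sigmaFun_sub_nonpos {p q s u : ℝ} {γ : ℝ → ℝ} (hp : 0 ≤ p) (hq : 0 ≤ q)
    (hs : s ≤ 1) (hγ : Differentiable ℝ γ) (hγ' : deriv γ (log u) ≤ 0) (hu : 0 < u) :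
    u * deriv (sigmaFun p q s γ) u - sigmaFun p q s γ u ≤ 0 := by
  have hEuler : u * deriv (sigmaFun p q s γ) u - sigmaFun p q s γ u
      = p * u * deriv γ (log u) + q * (s - 1) * u ^ s := by
    rw [(hasDerivAt_sigmaFun hγ hu.ne').deriv, sigmaFun]
    field_simp
    ring
  rw [hEuler]
  have hγ_term : p * u * deriv γ (log u) ≤ 0 :=
    mul_nonpos_of_nonneg_of_nonpos (by positivity) hγ'
  have hpow_term : q * (s - 1) * u ^ s ≤ 0 :=
    mul_nonpos_of_nonpos_of_nonneg (mul_nonpos_of_nonneg_of_nonpos hq (by linarith))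
      (rpow_pos_of_pos hu s).le
  linarith

theorem sigmaFun_secondOrder_nonneg {p q s μ u : ℝ} {γ : ℝ → ℝ} (hp : 0 ≤ p) (hq : 0 ≤ q)
    (hs : s ≤ 1) (hμs : μ * s ≤ 1) (hγ : Differentiable ℝ γ) (hγ' : Differentiable ℝ (deriv γ))
    (hγ'' : 0 ≤ μ * deriv (deriv γ) (log u) + (μ - 1) * deriv γ (log u)) (hu : 0 < u) :
    0 ≤ μ * u ^ 2 * deriv (deriv (sigmaFun p q s γ)) u - u * deriv (sigmaFun p q s γ) u
      + sigmaFun p q s γ u := by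
  have hEuler : μ * u ^ 2 * deriv (deriv (sigmaFun p q s γ)) u - u * deriv (sigmaFun p q s γ) u
      + sigmaFun p q s γ u = p * u * (μ * deriv (deriv γ) (log u) + (μ - 1) * deriv γ (log u))
        + q * ((1 - s) * (1 - μ * s)) * u ^ s := by
    rw [(hasDerivAt_deriv_sigmaFun hγ hγ' hu.ne').deriv, (hasDerivAt_sigmaFun hγ hu.ne').deriv,
      sigmaFun]
    field_simp
    ring
  rw [hEuler]
  have := rpow_pos_of_pos hu s
  have : 0 ≤ (1 - s) * (1 - μ * s) := mul_nonneg (by linarith) (by linarith)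
  positivity

theorem stmt_19_general (p q s μ : ℝ) (hp : 0 ≤ p) (hq : 0 ≤ q) (hs : s ≤ 1)
    (hμs : μ * s ≤ 1)
    (γ : ℝ → ℝ) (hγ : ContDiff ℝ 2 γ)
    (hγ0 : ∀ t : ℝ, 0 ≤ γ t) (hγ1 : ∀ t : ℝ, deriv γ t ≤ 0)
    (hγ2 : ∀ t : ℝ, 0 ≤ μ * deriv (deriv γ) t + (μ - 1) * deriv γ t)
    (S : ℝ → ℝ)
    (hS : ∀ u > (0:ℝ), S u = p * u * γ (Real.log u) + q * u ^ s) :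
    ∀ u > (0:ℝ),
      0 ≤ S u ∧ u * deriv S u - S u ≤ 0 ∧
      0 ≤ μ * u^2 * deriv (deriv S) u - u * deriv S u + S u := by
  have hγd : Differentiable ℝ γ := hγ.differentiable (by norm_num)
  have hγ'd : Differentiable ℝ (deriv γ) :=
    ((contDiff_succ_iff_deriv (n := 1)).1 hγ).2.2.differentiable one_ne_zero
  intro u hu
  have hSsigma : S =ᶠ[𝓝 u] sigmaFun p q s γ := by
    filter_upwards [eventually_gt_nhds hu] with v hv using hS v hv
  rw [hSsigma.eq_of_nhds, hSsigma.deriv_eq, hSsigma.deriv.deriv_eq]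
  exact ⟨sigmaFun_nonneg hp hq (hγ0 _) hu, mul_deriv_sigmaFun_sub_nonpos hp hq hs hγd (hγ1 _) hu,
    sigmaFun_secondOrder_nonneg hp hq hs hμs hγd hγ'd (hγ2 _) hu⟩

theorem stmt_19 (p q s μ : ℝ) (hp : 0 ≤ p) (hq : 0 ≤ q) (hs : s ≤ 1)
    (hμ : 1 < μ) (hμs : μ * s ≤ 1)
    (γ : ℝ → ℝ) (hγ : ContDiff ℝ 2 γ)
    (hγ0 : ∀ t : ℝ, 0 ≤ γ t) (hγ1 : ∀ t : ℝ, deriv γ t ≤ 0)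
    (hγ2 : ∀ t : ℝ, 0 ≤ μ * deriv (deriv γ) t + (μ - 1) * deriv γ t)
    (S : ℝ → ℝ)
    (hS : ∀ u > (0:ℝ), S u = p * u * γ (Real.log u) + q * u ^ s) :
    ∀ u > (0:ℝ),
      0 ≤ S u ∧ u * deriv S u - S u ≤ 0 ∧
      0 ≤ μ * u^2 * deriv (deriv S) u - u * deriv S u + S u :=
  stmt_19_general p q s μ hp hq hs hμs γ hγ hγ0 hγ1 hγ2 S hS
end
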